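/- arXiv:math/0308228 — 3 statements merged into one kernel-verified Lean document; each statement's English description precedes it below -/
import Mathlib

section
/- Let ~H and ~V be equivalence relations on a set P such that the composite relation ~D (p ~D q iff ∃ r, p ~H r and r ~V q) is an equivalence relation, and such that for all r, s ∈ P, if r ~H s and r ~V s then r = s. Then for every p, r, q ∈ P with p ~H r and r ~V q, there exists a unique v ∈ P with p ~V v and v ~H q. -/
section DoubleEquivalence

variable {P : Type*} {rH rV : P → P → Prop}

theorem exists_rV_rH_of_symmetric_comp (hH : ∀ {a b : P}, rH a b → rH b a)
    (hV : ∀ {a b : P}, rV a b → rV b a)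
    (hD : ∀ {a b : P}, (∃ r, rH a r ∧ rV r b) → ∃ r, rH b r ∧ rV r a) {p r q : P}
    (hpr : rH p r) (hrq : rV r q) : ∃ s, rV p s ∧ rH s q := by
  obtain ⟨s, hqs, hsp⟩ := hD ⟨r, hpr, hrq⟩
  exact ⟨s, hV hsp, hH hqs⟩

theorem eq_of_rV_rH_of_vacant (hH : Equivalence rH) (hV : Equivalence rV)
    (hvac : ∀ r s : P, rH r s → rV r s → r = s) {p q v w : P}
    (hpv : rV p v) (hvq : rH v q) (hpw : rV p w) (hwq : rH w q) : v = w :=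
  hvac v w (hH.trans hvq (hH.symm hwq)) (hV.trans (hV.symm hpv) hpw)

end DoubleEquivalence

/-- vacancy for double equivalence relations.  If the composite
relation `~D` is an equivalence relation and `r ~H s ∧ r ~V s → r = s`, then for
`p ~H r ~V q` there is a unique `v` with `p ~V v ~H q`. -/
theorem vacant_double_equivalence (P : Type*) (rH rV : P → P → Prop)
    (hH : Equivalence rH) (hV : Equivalence rV)
    (hD : Equivalence (fun p q : P => ∃ r, rH p r ∧ rV r q))
    (hvac : ∀ r s : P, rH r s → rV r s → r = s) :
    ∀ p r q : P, rH p r → rV r q → ∃! v : P, rV p v ∧ rH v q := by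
  intro p r q hpr hrq
  obtain ⟨s, hps, hsq⟩ := exists_rV_rH_of_symmetric_comp (rH := rH) (rV := rV)
    hH.symm hV.symm hD.symm hpr hrq
  exact ⟨s, ⟨hps, hsq⟩, fun v ⟨hpv, hvq⟩ =>
    eq_of_rV_rH_of_vacant hH hV hvac hpv hvq hps hsq⟩
end

section
/- Let ~H and ~V be equivalence relations on a finite set P such that ~D is an equivalence relation with a single class (all of P), and such that r ~H s and r ~V s imply r = s. Let Y₁, …, Yᵣ be the classes of ~H. Then for each i, fixing a ∈ Yᵢ, the map φᵢ : Y₁ → Yᵢ sending j to the unique k with j ~V k and k ~H a is a bijection; in particular each class Yᵢ is in bijection with Y₁. -/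
/-- a vacant, connected, finite double equivalence relation is a
"rectangle": every `~H`-class `Yᵢ = {p | p ~H a}` is in bijection with a fixed class
`Y₁ = {p | p ~H a₁}` via the map sending `j` to the unique `k` with `j ~V k` and
`k ~H a`. -/
theorem vacant_double_equivalence_rectangle (P : Type) [Finite P]
    (rH rV : P → P → Prop)
    (hH : Equivalence rH) (hV : Equivalence rV)
    (hD : Equivalence (fun p q : P => ∃ r, rH p r ∧ rV r q))
    (hone : ∀ p q : P, ∃ r, rH p r ∧ rV r q)
    (hvac : ∀ r s : P, rH r s → rV r s → r = s) :
    ∀ a₁ a : P,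
      (∀ j : P, rH j a₁ → ∃! k : P, rV j k ∧ rH k a) ∧
      ∀ φ : {p : P // rH p a₁} → {p : P // rH p a},
        (∀ j, rV j.1 (φ j).1) → Function.Bijective φ := by
  intro a₁ a
  constructor
  · intro j _
    obtain ⟨r, hr1, hr2⟩ := hone a j
    refine ⟨r, ⟨hV.symm hr2, hH.symm hr1⟩, ?_⟩
    intro k ⟨hk1, hk2⟩
    exact hvac k r (hH.trans hk2 hr1) (hV.trans (hV.symm hk1) (hV.symm hr2))
  · intro φ hφ
    constructor
    · intro j₁ j₂ h
      apply Subtype.ext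
      apply hvac _ _ (hH.trans j₁.2 (hH.symm j₂.2))
      exact hV.trans (hφ j₁) (h ▸ hV.symm (hφ j₂))
    · intro k
      obtain ⟨r, hr1, hr2⟩ := hone a₁ k.1
      refine ⟨⟨r, hH.symm hr1⟩, ?_⟩
      apply Subtype.ext
      exact hvac _ _ (hH.trans (φ ⟨r, hH.symm hr1⟩).2 (hH.symm k.2))
        (hV.trans (hV.symm (hφ ⟨r, hH.symm hr1⟩)) hr2)
end

section
/- Let F, G be a matched pair of finite groups and k a field. On the vector space with basis G × F, define a comultiplication Δ(e_s ⊗ x) = Σ_{uv = s} (e_u ⊗ (v ▷ x)) ⊗ (e_v ⊗ x) and counit ε(e_s ⊗ x) = δ_{s,1}. Then (Δ, ε) makes this space into a coassociative counital coalgebra. -/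
/-- The comultiplication `Δ(e_s ⊗ x) = Σ_{uv = s} (e_u ⊗ (v ▷ x)) ⊗ (e_v ⊗ x)` on
the vector space with basis `G × F`, identified with functions `G × F → k`; a tensor
`Δ f` is identified with a function of two variables. -/
def bismashComul (k : Type) [Field k] (F G : Type) [Group F] [Group G]
    [DecidableEq F] (tri : G → F → F) (f : G × F → k) :
    G × F → G × F → k :=
  fun p q => if p.2 = tri q.1 q.2 then f (p.1 * q.1, q.2) else 0

section

variable {k : Type} [Field k] {F G : Type} [Group F] [Group G] [DecidableEq F]
  {tri : G → F → F}

/-- Both sides of coassociativity are nonzero only when `p.2 = (q.1 * r.1) ▷ r.2` and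
`q.2 = r.1 ▷ r.2`, where they equal `f (p.1 * q.1 * r.1, r.2)`. -/
theorem bismashComul_coassoc
    (htri_mul : ∀ (s t : G) (x : F), tri (s * t) x = tri s (tri t x))
    (f : G × F → k) (p q r : G × F) :
    bismashComul k F G tri (fun y => bismashComul k F G tri f y r) p q
      = bismashComul k F G tri (fun y => bismashComul k F G tri f p y) q r := by
  simp only [bismashComul, htri_mul, mul_assoc]
  by_cases h : q.2 = tri r.1 r.2 <;> simp [h]

variable [Fintype F]

theorem sum_bismashComul_one_left (f : G × F → k) (p : G × F) :
    ∑ x : F, bismashComul k F G tri f (1, x) p = f p := by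
  simp [bismashComul]

theorem sum_bismashComul_one_right (htri_one : ∀ x : F, tri 1 x = x)
    (f : G × F → k) (p : G × F) :
    ∑ x : F, bismashComul k F G tri f p (1, x) = f p := by
  simp [bismashComul, htri_one]

end

theorem bismash_coalgebra_general (k : Type) [Field k] (F G : Type)
    [Group F] [Group G] [Fintype F] [DecidableEq F]
    (tri : G → F → F)
    (htri_one : ∀ x : F, tri 1 x = x)
    (htri_mul : ∀ (s t : G) (x : F), tri (s * t) x = tri s (tri t x)) :
    (∀ (f : G × F → k) (p q r : G × F),
      bismashComul k F G tri (fun y => bismashComul k F G tri f y r) p q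
        = bismashComul k F G tri (fun y => bismashComul k F G tri f p y) q r) ∧
    (∀ (f : G × F → k) (p : G × F),
      (∑ x : F, bismashComul k F G tri f (1, x) p) = f p ∧
      (∑ x : F, bismashComul k F G tri f p (1, x)) = f p) :=
  ⟨bismashComul_coassoc htri_mul,
    fun f p => ⟨sum_bismashComul_one_left f p, sum_bismashComul_one_right htri_one f p⟩⟩

/-- for a matched pair of finite groups, the comultiplication
`Δ(e_s ⊗ x) = Σ_{uv = s}(e_u ⊗ (v ▷ x)) ⊗ (e_v ⊗ x)` and counit
`ε(e_s ⊗ x) = δ_{s,1}` make `k(G × F)` a coassociative counital coalgebra.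
Coassociativity and the counit laws are expressed on coefficient functions;
`(ε ⊗ id)(Δ f)` is the function `p ↦ Σ_x Δf((1,x), p)`, and similarly on the
other side. -/
theorem bismash_coalgebra (k : Type) [Field k] (F G : Type)
    [Group F] [Group G] [Fintype F] [Fintype G] [DecidableEq F] [DecidableEq G]
    (tri : G → F → F) (trl : G → F → G)
    (htri_one : ∀ x : F, tri 1 x = x)
    (htri_mul : ∀ (s t : G) (x : F), tri (s * t) x = tri s (tri t x))
    (htrl_one : ∀ s : G, trl s 1 = s)
    (htrl_mul : ∀ (s : G) (x y : F), trl s (x * y) = trl (trl s x) y)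
    (hcomp1 : ∀ (s : G) (x y : F), tri s (x * y) = tri s x * tri (trl s x) y)
    (hcomp2 : ∀ (s t : G) (x : F), trl (s * t) x = trl s (tri t x) * trl t x)
    (htri1 : ∀ s : G, tri s 1 = 1)
    (htrl1 : ∀ x : F, trl 1 x = 1) :
    (∀ (f : G × F → k) (p q r : G × F),
      bismashComul k F G tri (fun y => bismashComul k F G tri f y r) p q
        = bismashComul k F G tri (fun y => bismashComul k F G tri f p y) q r) ∧
    (∀ (f : G × F → k) (p : G × F),
      (∑ x : F, bismashComul k F G tri f (1, x) p) = f p ∧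
      (∑ x : F, bismashComul k F G tri f p (1, x)) = f p) :=
  bismash_coalgebra_general k F G tri htri_one htri_mul
end
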